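/- For every ρ ∈ (0,1], one has 2·√(1−ρ²)·artanh(√(1−ρ²)) ≥ max(−2·log ρ, 4·(1−ρ)). In particular, the inequality 2·√(1−ρ²)·artanh(√(1−ρ²)) ≤ h simultaneously strengthens Avez's inequality −2·log ρ ≤ h and Ledrappier's inequality 4·(1−ρ) ≤ h. -/

import Mathlib

/-!
Put `s = √(1 - ρ²)`, so that `ρ² = (1 - s)(1 + s)` and `2 artanh s = log (1 + s) - log (1 - s)`.
Avez's bound then says `(1 + s) log (1 + s) + (1 - s) log (1 - s) ≥ 0`, the sum of two instances
of `x log x ≥ x - 1`. For Ledrappier's bound write `s = 2t / (1 + t²)` with the half-angle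
`t = s / (1 + ρ)`: the doubling formula gives `artanh s = 2 artanh t ≥ 2t` (the first term of the series of
`2 artanh t`), and `s t = 1 - ρ`.
-/

/-- Inverse hyperbolic tangent. -/
noncomputable def artanh (x : ℝ) : ℝ := (1 / 2) * Real.log ((1 + x) / (1 - x))

theorem two_mul_artanh_eq_log_sub_log {t : ℝ} (ht : |t| < 1) :
    2 * artanh t = Real.log (1 + t) - Real.log (1 - t) := by
  obtain ⟨h₁, h₂⟩ := abs_lt.mp ht
  rw [artanh, Real.log_div (by linarith) (by linarith)]
  ring

theorem self_le_artanh {t : ℝ} (h₀ : 0 ≤ t) (h₁ : t < 1) : t ≤ artanh t := by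
  have ht : |t| < 1 := abs_lt.mpr ⟨by linarith, h₁⟩
  have hfirst := le_hasSum (Real.hasSum_log_sub_log_of_abs_lt_one ht) 0 fun k _ => by positivity
  rw [← two_mul_artanh_eq_log_sub_log ht] at hfirst
  simpa using hfirst

theorem artanh_two_mul_div_one_add_sq (t : ℝ) :
    artanh (2 * t / (1 + t ^ 2)) = 2 * artanh t := by
  have h : 1 + t ^ 2 ≠ 0 := by positivity
  have hquot : (1 + 2 * t / (1 + t ^ 2)) / (1 - 2 * t / (1 + t ^ 2)) =
      ((1 + t) / (1 - t)) ^ 2 := by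
    rw [one_add_div h, one_sub_div h, div_div_div_cancel_right₀ h, div_pow]
    ring_nf
  rw [artanh, artanh, hquot, Real.log_pow]
  push_cast
  ring

theorem neg_log_one_sub_sq_le_mul_artanh {s : ℝ} (hs : |s| < 1) :
    -Real.log (1 - s ^ 2) ≤ 2 * s * artanh s := by
  obtain ⟨h₁, h₂⟩ := abs_lt.mp hs
  have hplus := Real.self_sub_one_le_mul_log (x := 1 + s) (by linarith)
  have hminus := Real.self_sub_one_le_mul_log (x := 1 - s) (by linarith)
  rw [mul_right_comm, two_mul_artanh_eq_log_sub_log hs,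
    show 1 - s ^ 2 = (1 - s) * (1 + s) by ring, Real.log_mul (by linarith) (by linarith)]
  nlinarith

theorem two_mul_one_sub_sqrt_one_sub_sq_le_mul_artanh {s : ℝ} (h₀ : 0 ≤ s) (h₁ : s < 1) :
    2 * (1 - √(1 - s ^ 2)) ≤ s * artanh s := by
  set c := √(1 - s ^ 2)
  have hc₀ : 0 ≤ c := Real.sqrt_nonneg _
  have hc : c ^ 2 = 1 - s ^ 2 := Real.sq_sqrt (by nlinarith)
  have hc₁ : 0 < 1 + c := by linarith
  set t := s / (1 + c) with ht_def
  have hs : 2 * t / (1 + t ^ 2) = s := by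
    rw [ht_def]
    field_simp
    linear_combination (-s) * hc
  have hst : s * t = 1 - c := by
    rw [ht_def]
    field_simp
    linear_combination hc
  have ht : t ≤ artanh t := self_le_artanh (by positivity) ((div_lt_one hc₁).mpr (by linarith))
  calc 2 * (1 - c) = 2 * (s * t) := by rw [hst]
    _ ≤ s * (2 * artanh t) := by nlinarith
    _ = s * artanh s := by rw [← artanh_two_mul_div_one_add_sq, hs]

/-- For every `ρ ∈ (0,1]`,
`max (-2 log ρ) (4 (1-ρ)) ≤ 2 √(1-ρ²) artanh √(1-ρ²)`, so the inequality
`2 √(1-ρ²) artanh √(1-ρ²) ≤ h` strengthens both Avez's and Ledrappier's inequalities. -/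
theorem max_avez_ledrappier_le (ρ : ℝ) (hρ : ρ ∈ Set.Ioc (0 : ℝ) 1) :
    max (-2 * Real.log ρ) (4 * (1 - ρ)) ≤
      2 * Real.sqrt (1 - ρ ^ 2) * artanh (Real.sqrt (1 - ρ ^ 2)) := by
  obtain ⟨hρ₀, hρ₁⟩ := hρ
  set s := √(1 - ρ ^ 2)
  have hs₀ : 0 ≤ s := Real.sqrt_nonneg _
  have hs : s ^ 2 = 1 - ρ ^ 2 := Real.sq_sqrt (by nlinarith)
  have hs₁ : s < 1 := by nlinarith
  refine max_le ?avez ?ledrappier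
  case avez =>
    calc -2 * Real.log ρ = -Real.log (1 - s ^ 2) := by
          rw [hs, sub_sub_cancel, Real.log_pow]; push_cast; ring
      _ ≤ 2 * s * artanh s := neg_log_one_sub_sq_le_mul_artanh (abs_lt.mpr ⟨by linarith, hs₁⟩)
  case ledrappier =>
    have hρs : √(1 - s ^ 2) = ρ := by rw [hs, sub_sub_cancel, Real.sqrt_sq hρ₀.le]
    have hled := two_mul_one_sub_sqrt_one_sub_sq_le_mul_artanh hs₀ hs₁
    rw [hρs] at hled
    linarith
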